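/- arXiv:2212.00453 — 8 statements merged into one kernel-verified Lean document; each statement's English description precedes it below -/
import Mathlib

section
/- For all α ∈ (0,1), with σ = 1 - α/2 and η the unique positive root of 1 - 3ρ²(1+ρ) = 0, the quantity f₁(α) = 2 - α - (1-α)·η^(-α) is strictly positive (in fact f₁(α) ≥ 0.6). -/
/-! Bernoulli's inequality bounds `η ^ (-α) = (1 + (η⁻¹ - 1)) ^ α` by `1 + α (η⁻¹ - 1)`, so
`f₁(α) ≥ 1 - α (1 - α) (η⁻¹ - 1) ≥ 1 - (η⁻¹ - 1) / 4`; the cubic gives `2/5 ≤ η ≤ 1`, hence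
`f₁(α) ≥ 5/8`. -/

open Real

lemma rpow_neg_le_one_add_mul {x a : ℝ} (hx : 0 < x) (ha0 : 0 ≤ a) (ha1 : a ≤ 1) :
    x ^ (-a) ≤ 1 + a * (x⁻¹ - 1) := by
  have hbern := rpow_one_add_le_one_add_mul_self
    (show (-1 : ℝ) ≤ x⁻¹ - 1 by linarith [inv_pos.mpr hx]) ha0 ha1
  rwa [add_sub_cancel, inv_rpow hx.le, ← rpow_neg hx.le] at hbern

lemma one_sub_inv_sub_one_div_four_le {x a : ℝ} (hx0 : 0 < x) (hx1 : x ≤ 1)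
    (ha0 : 0 ≤ a) (ha1 : a ≤ 1) :
    1 - (x⁻¹ - 1) / 4 ≤ 2 - a - (1 - a) * x ^ (-a) := by
  have hc : 0 ≤ x⁻¹ - 1 := sub_nonneg.mpr (one_le_inv₀ hx0 |>.mpr hx1)
  have hquarter : a * (1 - a) ≤ 1 / 4 := by nlinarith [sq_nonneg (a - 1 / 2)]
  calc 1 - (x⁻¹ - 1) / 4 ≤ 1 - a * (1 - a) * (x⁻¹ - 1) := by nlinarith
    _ = 2 - a - (1 - a) * (1 + a * (x⁻¹ - 1)) := by ring
    _ ≤ 2 - a - (1 - a) * x ^ (-a) := by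
      gcongr
      exact rpow_neg_le_one_add_mul hx0 ha0 ha1

lemma mem_Icc_of_cubic_root {η : ℝ} (hηpos : 0 < η) (hηroot : 1 - 3 * η ^ 2 * (1 + η) = 0) :
    η ∈ Set.Icc (2 / 5) 1 := by
  constructor <;> by_contra! h <;> nlinarith [mul_pos hηpos hηpos]

/-- For all `α ∈ (0,1)`, with `η` the unique positive root of `1 - 3ρ²(1+ρ) = 0`,
the quantity `f₁(α) = 2 - α - (1-α)·η^(-α)` is strictly positive, in fact `≥ 0.6`. -/
theorem stmt_1 (η : ℝ) (hηpos : 0 < η) (hηroot : 1 - 3 * η ^ 2 * (1 + η) = 0)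
    (α : ℝ) (hα0 : 0 < α) (hα1 : α < 1) :
    0.6 ≤ 2 - α - (1 - α) * η ^ (-α) ∧ 0 < 2 - α - (1 - α) * η ^ (-α) := by
  obtain ⟨hη_lb, hη_ub⟩ := mem_Icc_of_cubic_root hηpos hηroot
  have hinv : η⁻¹ ≤ 5 / 2 := by
    rw [inv_le_comm₀ hηpos (by norm_num)]
    linarith
  have hf := one_sub_inv_sub_one_div_four_le hηpos hη_ub hα0.le hα1.le
  constructor <;> norm_num at hf ⊢ <;> linarith
end

section
/- If ρ_j ≥ η and ρ_{j+1} > 0, where η is the unique positive root of 1 - 3ρ²(1+ρ) = 0, then (4τ_j + 3τ_{j+1})τ_j/(τ_j + τ_{j+1}) - τ_{j-1}³/(τ_j(τ_{j-1} + τ_j)) ≥ 0, where τ_j = ρ_j τ_{j-1} and τ_{j+1} = ρ_{j+1} τ_j with τ_{j-1} > 0. -/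
/-!
Writing `τ_j = ρ_j τ_{j-1}` and `τ_{j+1} = ρ_{j+1} τ_j`, the expression equals
`τ_j (1/(1+ρ_{j+1}) + (3ρ_j²(1+ρ_j) - 1)/(ρ_j²(1+ρ_j)))`. The first summand is positive, and
the second is nonnegative because `ρ ↦ 3ρ²(1+ρ)` is increasing on `[0, ∞)` and equals `1` at `η`.
-/

lemma three_mul_sq_mul_one_add_le {η ρ : ℝ} (hη : 0 ≤ η) (hηρ : η ≤ ρ) :
    3 * η ^ 2 * (1 + η) ≤ 3 * ρ ^ 2 * (1 + ρ) := by
  gcongr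

lemma step_ratio_expr_eq {a ρ σ : ℝ} (ha : a ≠ 0) (hρ : ρ ≠ 0) (hρ' : 1 + ρ ≠ 0)
    (hσ : 1 + σ ≠ 0) :
    (4 * (ρ * a) + 3 * (σ * (ρ * a))) * (ρ * a) / (ρ * a + σ * (ρ * a))
        - a ^ 3 / (ρ * a * (a + ρ * a)) =
      ρ * a * (1 / (1 + σ) + (3 * ρ ^ 2 * (1 + ρ) - 1) / (ρ ^ 2 * (1 + ρ))) := by
  field_simp
  ring

/-- If `ρ_j ≥ η` and `ρ_{j+1} > 0`, where `η` is the unique positive root of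
`1 - 3ρ²(1+ρ) = 0`, then
`(4τ_j + 3τ_{j+1})τ_j/(τ_j + τ_{j+1}) - τ_{j-1}³/(τ_j(τ_{j-1} + τ_j)) ≥ 0`,
where `τ_j = ρ_j τ_{j-1}` and `τ_{j+1} = ρ_{j+1} τ_j` with `τ_{j-1} > 0`. -/
theorem stmt_3 (η : ℝ) (hηpos : 0 < η) (hηroot : 1 - 3 * η ^ 2 * (1 + η) = 0)
    (τjm1 ρj ρj1 : ℝ) (hτ : 0 < τjm1) (hρj : η ≤ ρj) (hρj1 : 0 < ρj1)
    (τj τj1 : ℝ) (hτj : τj = ρj * τjm1) (hτj1 : τj1 = ρj1 * τj) :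
    0 ≤ (4 * τj + 3 * τj1) * τj / (τj + τj1) - τjm1 ^ 3 / (τj * (τjm1 + τj)) := by
  have hρjpos : 0 < ρj := hηpos.trans_le hρj
  have hgrowth : 0 ≤ 3 * ρj ^ 2 * (1 + ρj) - 1 := by
    linarith [three_mul_sq_mul_one_add_le hηpos.le hρj]
  subst hτj1 hτj
  rw [step_ratio_expr_eq hτ.ne' hρjpos.ne' (by positivity) (by positivity)]
  positivity
end

section
/- For any θ > 0 and τ > 0, the quantity θτ·∫₀¹ (1-3s)(1-s)e^{-θsτ} ds equals 1 + ∫₀¹ (6s-4)e^{-θsτ} ds, and this value lies strictly between 0 and 1; consequently there exists ξ ∈ (0,1) with θτ·∫₀¹ (1-3s)(1-s)e^{-θsτ} ds = 1 - e^{-θξτ}. -/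
/-!
Write `a = θτ` and `I = ∫₀¹ (1-3s)(1-s)e^{-as} ds`. Every identity below is the fundamental
theorem of calculus for `p(s)e^{-as}`, whose derivative is `(p' - a p)e^{-as}`:
`p = (1-3s)(s-1)` gives `aI = 1 + ∫₀¹ (6s-4)e^{-as} ds`, `p = s(1-s)²` gives
`I = a∫₀¹ s(1-s)²e^{-as} ds > 0`, and `p = -1` gives `a∫₀¹ e^{-as} ds = 1 - e^{-a}`, so that
`1 - e^{-a} - aI = a∫₀¹ (4s-3s²)e^{-as} ds > 0`. Hence `0 < aI < 1 - e^{-a}`, and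
`ξ = -log(1 - aI)/a` lies in `(0,1)`.
-/

open Real Set

theorem integral_deriv_sub_mul_mul_exp_neg {p p' : ℝ → ℝ} (a u v : ℝ)
    (hp : ∀ x, HasDerivAt p (p' x) x) (hp' : Continuous p') :
    ∫ s in u..v, (p' s - a * p s) * exp (-(a * s))
      = p v * exp (-(a * v)) - p u * exp (-(a * u)) := by
  have hcont : Continuous p := continuous_iff_continuousAt.2 fun x => (hp x).continuousAt
  refine intervalIntegral.integral_eq_sub_of_hasDerivAt (f := fun s => p s * exp (-(a * s)))
    (fun x _ => ?_)
    ((by fun_prop : Continuous fun s => (p' s - a * p s) * exp (-(a * s))).intervalIntegrable _ _)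
  exact ((hp x).fun_mul (((hasDerivAt_id' x).const_mul a).fun_neg.exp)).congr_deriv (by ring)

section

variable (a : ℝ)

theorem intervalIntegrable_mul_exp_neg_mul {q : ℝ → ℝ} (hq : Continuous q) {u v : ℝ} :
    IntervalIntegrable (fun s => q s * exp (-(a * s))) MeasureTheory.volume u v :=
  (by fun_prop : Continuous _).intervalIntegrable _ _

theorem integral_mul_exp_neg_mul_pos {q : ℝ → ℝ} (hq : Continuous q)
    (hpos : ∀ s ∈ Ioo (0:ℝ) 1, 0 < q s) :
    0 < ∫ s in (0:ℝ)..1, q s * exp (-(a * s)) :=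
  intervalIntegral.intervalIntegral_pos_of_pos_on (intervalIntegrable_mul_exp_neg_mul a hq)
    (fun s hs => mul_pos (hpos s hs) (exp_pos _)) one_pos

theorem mul_integral_exp_neg_mul : a * ∫ s in (0:ℝ)..1, exp (-(a * s)) = 1 - exp (-a) := by
  have h := integral_deriv_sub_mul_mul_exp_neg (p := fun _ => -1) (p' := fun _ => 0) a 0 1
    (fun x => hasDerivAt_const x _) continuous_const
  rw [← intervalIntegral.integral_const_mul]
  convert h using 1
  · congr 1; ext s; ring
  · norm_num; ring

theorem mul_integral_quadratic_mul_exp_eq_one_add :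
    a * ∫ s in (0:ℝ)..1, (1 - 3 * s) * (1 - s) * exp (-(a * s))
      = 1 + ∫ s in (0:ℝ)..1, (6 * s - 4) * exp (-(a * s)) := by
  have h := integral_deriv_sub_mul_mul_exp_neg (p := fun s => (1 - 3 * s) * (s - 1))
    (p' := fun s => 4 - 6 * s) a 0 1
    (fun x => (((hasDerivAt_id' x).const_mul 3).const_sub 1 |>.fun_mul
        ((hasDerivAt_id' x).sub_const 1)).congr_deriv (by ring))
    (by fun_prop)
  rw [← sub_eq_iff_eq_add, ← intervalIntegral.integral_const_mul,
    ← intervalIntegral.integral_sub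
      ((intervalIntegrable_mul_exp_neg_mul a (q := fun s => (1 - 3 * s) * (1 - s))
        (by fun_prop)).const_mul a)
      (intervalIntegrable_mul_exp_neg_mul a (q := fun s => 6 * s - 4) (by fun_prop))]
  convert h using 1
  · congr 1; ext s; ring
  · norm_num

theorem integral_quadratic_mul_exp_eq_mul_integral :
    ∫ s in (0:ℝ)..1, (1 - 3 * s) * (1 - s) * exp (-(a * s))
      = a * ∫ s in (0:ℝ)..1, s * (1 - s) ^ 2 * exp (-(a * s)) := by
  have h := integral_deriv_sub_mul_mul_exp_neg (p := fun s => s * (1 - s) ^ 2)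
    (p' := fun s => (1 - 3 * s) * (1 - s)) a 0 1
    (fun x => ((hasDerivAt_id' x).fun_mul
        (((hasDerivAt_id' x).const_sub 1).fun_pow 2)).congr_deriv (by ring))
    (by fun_prop)
  rw [← sub_eq_zero, ← intervalIntegral.integral_const_mul,
    ← intervalIntegral.integral_sub
      (intervalIntegrable_mul_exp_neg_mul a (q := fun s => (1 - 3 * s) * (1 - s)) (by fun_prop))
      ((intervalIntegrable_mul_exp_neg_mul a (q := fun s => s * (1 - s) ^ 2)
        (by fun_prop)).const_mul a)]
  convert h using 1
  · congr 1; ext s; ring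
  · norm_num

variable {a}

theorem mul_integral_quadratic_mul_exp_pos (ha : 0 < a) :
    0 < a * ∫ s in (0:ℝ)..1, (1 - 3 * s) * (1 - s) * exp (-(a * s)) := by
  have hK : 0 < ∫ s in (0:ℝ)..1, s * (1 - s) ^ 2 * exp (-(a * s)) :=
    integral_mul_exp_neg_mul_pos a (q := fun s => s * (1 - s) ^ 2) (by fun_prop)
      fun s hs => mul_pos hs.1 (pow_pos (sub_pos.2 hs.2) 2)
  rw [integral_quadratic_mul_exp_eq_mul_integral]
  positivity

theorem mul_integral_quadratic_mul_exp_lt (ha : 0 < a) :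
    a * ∫ s in (0:ℝ)..1, (1 - 3 * s) * (1 - s) * exp (-(a * s)) < 1 - exp (-a) := by
  have hgap : 0 < ∫ s in (0:ℝ)..1, (4 * s - 3 * s ^ 2) * exp (-(a * s)) :=
    integral_mul_exp_neg_mul_pos a (q := fun s => 4 * s - 3 * s ^ 2) (by fun_prop)
      fun s hs => by nlinarith [hs.1, hs.2]
  have hsplit : ∫ s in (0:ℝ)..1, (4 * s - 3 * s ^ 2) * exp (-(a * s))
      = (∫ s in (0:ℝ)..1, exp (-(a * s)))
        - ∫ s in (0:ℝ)..1, (1 - 3 * s) * (1 - s) * exp (-(a * s)) := by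
    rw [← intervalIntegral.integral_sub
      ((by fun_prop : Continuous fun s => exp (-(a * s))).intervalIntegrable 0 1)
      (intervalIntegrable_mul_exp_neg_mul a (q := fun s => (1 - 3 * s) * (1 - s)) (by fun_prop))]
    congr 1; ext s; ring
  rw [← mul_integral_exp_neg_mul a]
  nlinarith [mul_pos ha hgap]

end

theorem exists_eq_one_sub_exp_neg_mul {a v : ℝ} (ha : 0 < a) (hv : 0 < v)
    (hva : v < 1 - exp (-a)) : ∃ ξ : ℝ, 0 < ξ ∧ ξ < 1 ∧ v = 1 - exp (-(a * ξ)) := by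
  have h1v : 0 < 1 - v := by linarith [exp_pos (-a)]
  have hlog_neg : log (1 - v) < 0 := log_neg h1v (by linarith)
  have hlog_gt : -a < log (1 - v) := (lt_log_iff_exp_lt h1v).2 (by linarith)
  refine ⟨-log (1 - v) / a, div_pos (by linarith) ha, (div_lt_one ha).2 (by linarith), ?_⟩
  rw [mul_div_cancel₀ _ ha.ne', neg_neg, exp_log h1v]
  ring

/-- For any `θ > 0` and `τ > 0`, the quantity `θτ·∫₀¹ (1-3s)(1-s)e^{-θsτ} ds`
equals `1 + ∫₀¹ (6s-4)e^{-θsτ} ds`, lies strictly between `0` and `1`, and hence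
equals `1 - e^{-θξτ}` for some `ξ ∈ (0,1)`. -/
theorem stmt_4 (θ τ : ℝ) (hθ : 0 < θ) (hτ : 0 < τ) :
    θ * τ * ∫ s in (0:ℝ)..1, (1 - 3 * s) * (1 - s) * Real.exp (-θ * s * τ)
      = 1 + ∫ s in (0:ℝ)..1, (6 * s - 4) * Real.exp (-θ * s * τ) ∧
    0 < θ * τ * ∫ s in (0:ℝ)..1, (1 - 3 * s) * (1 - s) * Real.exp (-θ * s * τ) ∧
    θ * τ * (∫ s in (0:ℝ)..1, (1 - 3 * s) * (1 - s) * Real.exp (-θ * s * τ)) < 1 ∧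
    ∃ ξ : ℝ, 0 < ξ ∧ ξ < 1 ∧
      θ * τ * ∫ s in (0:ℝ)..1, (1 - 3 * s) * (1 - s) * Real.exp (-θ * s * τ)
        = 1 - Real.exp (-θ * ξ * τ) := by
  have ha : 0 < θ * τ := mul_pos hθ hτ
  have hexp : ∀ s, exp (-θ * s * τ) = exp (-(θ * τ * s)) := fun s => by ring_nf
  simp only [hexp]
  have hpos := mul_integral_quadratic_mul_exp_pos ha
  have hlt := mul_integral_quadratic_mul_exp_lt ha
  exact ⟨mul_integral_quadratic_mul_exp_eq_one_add _, hpos,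
    hlt.trans (sub_lt_self _ (exp_pos _)), exists_eq_one_sub_exp_neg_mul ha hpos hlt⟩
end

section
/- For a single exponential kernel with node θ > 0, the coefficient â_j^{(k)} = ∫₀¹ ((-2τ_j(1-s) - τ_{j+1})/(τ_j + τ_{j+1})) e^{-θ(t_k^* - t_{j-1} - sτ_j)} ds admits the identity â_j^{(k)} = -[e^{-θ(t_k^* - t_{j-1})} + (θτ_j/(τ_j + τ_{j+1})) ∫₀¹ (τ_j + τ_{j+1} - sτ_j)(1-s) e^{-θ(t_k^* - t_{j-1} - sτ_j)} ds]. -/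
open Real

/-! With `g(s) = (τ + σ - sτ)(1 - s) e^{-θ(A - sτ)}`, the product rule gives
`g' = (-2τ(1 - s) - σ) e^{-θ(A - sτ)} + θτ g`. Since `g 1 = 0` and `g 0 = (τ + σ) e^{-θA}`,
integrating over `[0, 1]` and dividing by `τ + σ` yields the identity. -/

section ExponentialKernel

variable (θ A τ σ : ℝ)

theorem hasDerivAt_mul_one_sub_mul_exp (s : ℝ) :
    HasDerivAt (fun s => (τ + σ - s * τ) * (1 - s) * exp (-θ * (A - s * τ)))
      ((-2 * τ * (1 - s) - σ) * exp (-θ * (A - s * τ))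
        + θ * τ * ((τ + σ - s * τ) * (1 - s) * exp (-θ * (A - s * τ)))) s := by
  have hpoly : HasDerivAt (fun s => (τ + σ - s * τ) * (1 - s))
      (-τ * (1 - s) + (τ + σ - s * τ) * -1) s := by
    simpa using (((hasDerivAt_id s).mul_const τ).const_sub (τ + σ)).fun_mul
      ((hasDerivAt_id s).const_sub 1)
  have hexp : HasDerivAt (fun s => exp (-θ * (A - s * τ)))
      (exp (-θ * (A - s * τ)) * (-θ * -τ)) s :=
    (((hasDerivAt_id s).mul_const τ).const_sub A |>.const_mul (-θ) |>.congr_deriv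
      (by simp)).exp
  exact (hpoly.fun_mul hexp).congr_deriv (by ring)

theorem integral_mul_exp_add_const_mul_integral :
    (∫ s in (0:ℝ)..1, (-2 * τ * (1 - s) - σ) * exp (-θ * (A - s * τ)))
      + θ * τ * ∫ s in (0:ℝ)..1, (τ + σ - s * τ) * (1 - s) * exp (-θ * (A - s * τ))
      = -((τ + σ) * exp (-θ * A)) := by
  rw [← intervalIntegral.integral_const_mul, ← intervalIntegral.integral_add
      (by apply Continuous.intervalIntegrable; fun_prop)
      (by apply Continuous.intervalIntegrable; fun_prop),
    intervalIntegral.integral_eq_sub_of_hasDerivAt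
      (fun s _ => hasDerivAt_mul_one_sub_mul_exp θ A τ σ s)
      (by apply Continuous.intervalIntegrable; fun_prop)]
  simp

end ExponentialKernel

theorem stmt_7_general (θ tjm1 tj tkstar τj τj1 : ℝ)
    (h1 : tjm1 < tj)
    (hτj : τj = tj - tjm1) (hτj1 : 0 < τj1) :
    ∫ s in (0:ℝ)..1, (-2 * τj * (1 - s) - τj1) / (τj + τj1) *
        Real.exp (-θ * (tkstar - tjm1 - s * τj))
      = -(Real.exp (-θ * (tkstar - tjm1)) + θ * τj / (τj + τj1) *
          ∫ s in (0:ℝ)..1, (τj + τj1 - s * τj) * (1 - s) *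
            Real.exp (-θ * (tkstar - tjm1 - s * τj))) := by
  have hden : τj + τj1 ≠ 0 := by rw [hτj]; linarith
  have key := integral_mul_exp_add_const_mul_integral θ (tkstar - tjm1) τj τj1
  simp_rw [div_mul_eq_mul_div, intervalIntegral.integral_div]
  generalize (∫ s in (0:ℝ)..1, (-2 * τj * (1 - s) - τj1) *
    exp (-θ * (tkstar - tjm1 - s * τj))) = I at key ⊢
  generalize (∫ s in (0:ℝ)..1, (τj + τj1 - s * τj) * (1 - s) *
    exp (-θ * (tkstar - tjm1 - s * τj))) = J at key ⊢
  field_simp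
  rw [neg_mul] at key
  linear_combination key

/-- For a single exponential kernel with node `θ > 0`, the coefficient
`â_j^{(k)} = ∫₀¹ ((-2τ_j(1-s) - τ_{j+1})/(τ_j + τ_{j+1})) e^{-θ(t_k^* - t_{j-1} - sτ_j)} ds`
admits the identity
`â_j^{(k)} = -[e^{-θ(t_k^* - t_{j-1})} + (θτ_j/(τ_j + τ_{j+1})) ∫₀¹ (τ_j + τ_{j+1} - sτ_j)(1-s) e^{-θ(t_k^* - t_{j-1} - sτ_j)} ds]`. -/
theorem stmt_7 (θ tjm1 tj tkstar τj τj1 : ℝ) (hθ : 0 < θ)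
    (h0 : 0 ≤ tjm1) (h1 : tjm1 < tj) (h2 : tj < tkstar)
    (hτj : τj = tj - tjm1) (hτj1 : 0 < τj1) :
    ∫ s in (0:ℝ)..1, (-2 * τj * (1 - s) - τj1) / (τj + τj1) *
        Real.exp (-θ * (tkstar - tjm1 - s * τj))
      = -(Real.exp (-θ * (tkstar - tjm1)) + θ * τj / (τj + τj1) *
          ∫ s in (0:ℝ)..1, (τj + τj1 - s * τj) * (1 - s) *
            Real.exp (-θ * (tkstar - tjm1 - s * τj))) :=
  stmt_7_general θ tjm1 tj tkstar τj τj1 h1 hτj hτj1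
end

section
/- For a single exponential kernel with node θ > 0, the coefficient ĉ_j^{(k)} = ∫_{t_{j-1}}^{t_j} ((2s - t_{j-1} - t_j)/(τ_{j+1}(τ_j + τ_{j+1}))) e^{-θ(t_k^* - s)} ds equals (θτ_j³/(τ_{j+1}(τ_j + τ_{j+1}))) ∫₀¹ s(1-s) e^{-θ(t_k^* - t_j + sτ_j)} ds. -/
/-!
Since `(s - t_{j-1}) (s - t_j)` is an antiderivative of `2s - t_{j-1} - t_j` vanishing at both
endpoints, one integration by parts moves the derivative onto the exponential, which reproduces
itself with a factor `θ`. The affine change of variables `s = t_j - u τ_j` then maps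
`[t_{j-1}, t_j]` onto `[0, 1]` and turns `(s - t_{j-1}) (t_j - s) ds` into `τ_j³ u (1 - u) du`.
-/

open MeasureTheory intervalIntegral

theorem integral_two_mul_sub_mul_eq_integral_mul_deriv {f f' : ℝ → ℝ} {a b : ℝ}
    (hf : ∀ x ∈ Set.uIcc a b, HasDerivAt f (f' x) x) (hf' : IntervalIntegrable f' volume a b) :
    ∫ s in a..b, (2 * s - a - b) * f s = ∫ s in a..b, (s - a) * (b - s) * f' s := by
  have hv : ∀ x ∈ Set.uIcc a b,
      HasDerivAt (fun s => (s - a) * (s - b)) (2 * x - a - b) x := fun x _ =>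
    (((hasDerivAt_id x).sub_const a).mul ((hasDerivAt_id x).sub_const b)).congr_deriv
      (by simp only [id, one_mul, mul_one]; ring)
  have hparts := integral_mul_deriv_eq_deriv_mul hf hv hf'
    (by apply Continuous.intervalIntegrable; fun_prop)
  simp only [sub_self, mul_zero, zero_mul, zero_sub] at hparts
  calc ∫ s in a..b, (2 * s - a - b) * f s
      = ∫ s in a..b, f s * (2 * s - a - b) := by simp only [mul_comm]
    _ = -∫ s in a..b, f' s * ((s - a) * (s - b)) := hparts
    _ = ∫ s in a..b, (s - a) * (b - s) * f' s := by
      rw [← intervalIntegral.integral_neg]; congr 1; funext s; ring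

theorem integral_mul_sub_mul_eq_pow_three_mul_integral_unitInterval (g : ℝ → ℝ) (a b : ℝ) :
    ∫ s in a..b, (s - a) * (b - s) * g s
      = (b - a) ^ 3 * ∫ u in (0:ℝ)..1, u * (1 - u) * g (b - (b - a) * u) := by
  have hsubst := smul_integral_comp_sub_mul (a := 0) (b := 1)
    (fun s => (s - a) * (b - s) * g s) (b - a) b
  simp only [mul_one, mul_zero, sub_sub_cancel, sub_zero, smul_eq_mul] at hsubst
  rw [← hsubst, ← intervalIntegral.integral_const_mul, ← intervalIntegral.integral_const_mul]
  congr 1; funext u; ring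

theorem stmt_8_general (θ tjm1 tj tkstar τj τj1 : ℝ)
    (hτj : τj = tj - tjm1) :
    ∫ s in tjm1..tj, (2 * s - tjm1 - tj) / (τj1 * (τj + τj1)) *
        Real.exp (-θ * (tkstar - s))
      = θ * τj ^ 3 / (τj1 * (τj + τj1)) *
          ∫ s in (0:ℝ)..1, s * (1 - s) * Real.exp (-θ * (tkstar - tj + s * τj)) := by
  set D := τj1 * (τj + τj1)
  set E : ℝ → ℝ := fun s => Real.exp (-θ * (tkstar - s))
  have hE : ∀ s, HasDerivAt E (θ * E s) s := fun s => by
    simpa [E, mul_comm] using (((hasDerivAt_id s).const_sub tkstar).const_mul (-θ)).exp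
  calc ∫ s in tjm1..tj, (2 * s - tjm1 - tj) / D * E s
      = (∫ s in tjm1..tj, (2 * s - tjm1 - tj) * E s) / D := by
        rw [← intervalIntegral.integral_div]; congr 1; funext s; ring
    _ = θ * (∫ s in tjm1..tj, (s - tjm1) * (tj - s) * E s) / D := by
        rw [integral_two_mul_sub_mul_eq_integral_mul_deriv (fun s _ => hE s)
          (by apply Continuous.intervalIntegrable; fun_prop),
          ← intervalIntegral.integral_const_mul]
        congr 2; funext s; ring
    _ = θ * τj ^ 3 / D * ∫ s in (0:ℝ)..1, s * (1 - s) * E (tj - τj * s) := by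
        rw [integral_mul_sub_mul_eq_pow_three_mul_integral_unitInterval, ← hτj]; ring
    _ = _ := by simp only [E, sub_sub_eq_add_sub, add_sub_right_comm, mul_comm τj]

/-- For a single exponential kernel with node `θ > 0`, the coefficient
`ĉ_j^{(k)} = ∫_{t_{j-1}}^{t_j} ((2s - t_{j-1} - t_j)/(τ_{j+1}(τ_j + τ_{j+1}))) e^{-θ(t_k^* - s)} ds`
equals `(θτ_j³/(τ_{j+1}(τ_j + τ_{j+1}))) ∫₀¹ s(1-s) e^{-θ(t_k^* - t_j + sτ_j)} ds`. -/
theorem stmt_8 (θ tjm1 tj tkstar τj τj1 : ℝ) (hθ : 0 < θ)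
    (h1 : tjm1 < tj) (h2 : tj < tkstar)
    (hτj : τj = tj - tjm1) (hτj1 : 0 < τj1) :
    ∫ s in tjm1..tj, (2 * s - tjm1 - tj) / (τj1 * (τj + τj1)) *
        Real.exp (-θ * (tkstar - s))
      = θ * τj ^ 3 / (τj1 * (τj + τj1)) *
          ∫ s in (0:ℝ)..1, s * (1 - s) * Real.exp (-θ * (tkstar - tj + s * τj)) :=
  stmt_8_general θ tjm1 tj tkstar τj τj1 hτj
end

section
/- Let θ > 0, and let τ_j > 0, τ_{j+1} > 0, and t_k^* ≥ t_j. Then -e^{-θ(t_k^* - t_j)} + (θτ_j/(τ_j + τ_{j+1})) ∫₀¹ (τ_j + τ_{j+1} + sτ_j)(1-s) e^{-θ(t_k^* - t_j + sτ_j)} ds is strictly negative; i.e., (θτ_j/(τ_j + τ_{j+1})) ∫₀¹ (τ_j + τ_{j+1} + sτ_j)(1-s) e^{-θsτ_j} ds < 1. -/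
open Real

/- Since `τ ≤ A`, the weight `(A + sτ)(1 - s)` of the integrand never exceeds its value `A` at
`s = 0`, so the integral is at most `∫₀¹ θτ e^{-θτ s} ds = 1 - e^{-θτ} < 1`. The shift by
`t_k^* - t_j` only multiplies the integral by the positive factor `e^{-θ(t_k^* - t_j)}`. -/

theorem integral_mul_exp_neg_mul (a : ℝ) :
    ∫ s in (0:ℝ)..1, a * exp (-a * s) = 1 - exp (-a) := by
  have hderiv : ∀ s ∈ Set.uIcc (0:ℝ) 1,
      HasDerivAt (fun s => -exp (-a * s)) (a * exp (-a * s)) s := fun s _ =>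
    (((hasDerivAt_id' s).const_mul (-a)).exp.fun_neg).congr_deriv (by ring)
  rw [intervalIntegral.integral_eq_sub_of_hasDerivAt hderiv
    (Continuous.intervalIntegrable (by fun_prop) _ _)]
  simp only [mul_one, mul_zero, exp_zero, sub_neg_eq_add]
  ring

theorem add_mul_mul_one_sub_le {A τ s : ℝ} (hτ : 0 ≤ τ) (hτA : τ ≤ A) (hs : 0 ≤ s) :
    (A + s * τ) * (1 - s) ≤ A := by
  nlinarith [mul_nonneg hs (sub_nonneg.2 hτA), mul_nonneg (mul_nonneg hs hs) hτ]

theorem mul_integral_weighted_exp_lt_one {θ τ τ' : ℝ} (hθ : 0 < θ) (hτ : 0 < τ) (hτ' : 0 ≤ τ') :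
    θ * τ / (τ + τ') *
      (∫ s in (0:ℝ)..1, (τ + τ' + s * τ) * (1 - s) * exp (-θ * (s * τ))) < 1 := by
  have hA : 0 < τ + τ' := by linarith
  have hweight : ∀ s ∈ Set.Icc (0:ℝ) 1,
      θ * τ / (τ + τ') * ((τ + τ' + s * τ) * (1 - s) * exp (-θ * (s * τ))) ≤
        θ * τ * exp (-(θ * τ) * s) := by
    rintro s ⟨hs, -⟩
    have hle := add_mul_mul_one_sub_le hτ.le (le_add_of_nonneg_right hτ') hs
    calc θ * τ / (τ + τ') * ((τ + τ' + s * τ) * (1 - s) * exp (-θ * (s * τ)))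
        ≤ θ * τ / (τ + τ') * ((τ + τ') * exp (-θ * (s * τ))) := by gcongr
      _ = θ * τ * exp (-(θ * τ) * s) := by field_simp
  calc θ * τ / (τ + τ') * (∫ s in (0:ℝ)..1, (τ + τ' + s * τ) * (1 - s) * exp (-θ * (s * τ)))
      ≤ ∫ s in (0:ℝ)..1, θ * τ * exp (-(θ * τ) * s) := by
        rw [← intervalIntegral.integral_const_mul]
        exact intervalIntegral.integral_mono_on zero_le_one
          (Continuous.intervalIntegrable (by fun_prop) _ _)
          (Continuous.intervalIntegrable (by fun_prop) _ _) hweight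
    _ = 1 - exp (-(θ * τ)) := integral_mul_exp_neg_mul _
    _ < 1 := sub_lt_self _ (exp_pos _)

theorem stmt_9_general (θ τj τj1 tj tkstar : ℝ) (hθ : 0 < θ) (hτj : 0 < τj) (hτj1 : 0 < τj1) :
    (-Real.exp (-θ * (tkstar - tj)) + θ * τj / (τj + τj1) *
        ∫ s in (0:ℝ)..1, (τj + τj1 + s * τj) * (1 - s) *
          Real.exp (-θ * (tkstar - tj + s * τj)) < 0) ∧
    θ * τj / (τj + τj1) *
        (∫ s in (0:ℝ)..1, (τj + τj1 + s * τj) * (1 - s) * Real.exp (-θ * (s * τj))) < 1 := by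
  have hlt := mul_integral_weighted_exp_lt_one hθ hτj hτj1.le
  refine ⟨?_, hlt⟩
  have hshift : ∀ s : ℝ, (τj + τj1 + s * τj) * (1 - s) * exp (-θ * (tkstar - tj + s * τj)) =
      exp (-θ * (tkstar - tj)) * ((τj + τj1 + s * τj) * (1 - s) * exp (-θ * (s * τj))) := by
    intro s
    rw [show -θ * (tkstar - tj + s * τj) = -θ * (tkstar - tj) + -θ * (s * τj) by ring, exp_add]
    ring
  simp only [hshift, intervalIntegral.integral_const_mul]
  nlinarith [mul_lt_mul_of_pos_left hlt (exp_pos (-θ * (tkstar - tj)))]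

/-- Let `θ > 0`, `τ_j > 0`, `τ_{j+1} > 0`, `t_k^* ≥ t_j`. Then
`-e^{-θ(t_k^* - t_j)} + (θτ_j/(τ_j + τ_{j+1})) ∫₀¹ (τ_j + τ_{j+1} + sτ_j)(1-s) e^{-θ(t_k^* - t_j + sτ_j)} ds`
is strictly negative; i.e.
`(θτ_j/(τ_j + τ_{j+1})) ∫₀¹ (τ_j + τ_{j+1} + sτ_j)(1-s) e^{-θsτ_j} ds < 1`. -/
theorem stmt_9 (θ τj τj1 tj tkstar : ℝ) (hθ : 0 < θ) (hτj : 0 < τj) (hτj1 : 0 < τj1)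
    (ht : tj ≤ tkstar) :
    (-Real.exp (-θ * (tkstar - tj)) + θ * τj / (τj + τj1) *
        ∫ s in (0:ℝ)..1, (τj + τj1 + s * τj) * (1 - s) *
          Real.exp (-θ * (tkstar - tj + s * τj)) < 0) ∧
    θ * τj / (τj + τj1) *
        (∫ s in (0:ℝ)..1, (τj + τj1 + s * τj) * (1 - s) * Real.exp (-θ * (s * τj))) < 1 :=
  stmt_9_general θ τj τj1 tj tkstar hθ hτj hτj1
end

section
/- Let S be an n×n real symmetric matrix with positive entries satisfying: (1) S_{i-1,j} ≥ S_{i,j} for all 1 ≤ j < i ≤ n; (2) S_{i,j-1} < S_{i,j} for all 1 < j ≤ i ≤ n; (3) S_{i-1,j-1} - S_{i,j-1} ≤ S_{i-1,j} - S_{i,j} for all 1 < j < i ≤ n. Then S is positive semidefinite. -/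
/-!
Extend `S` by zero to row and column `0` and let `D` be its mixed second difference, so that
`S i j = ∑_{a ≤ i, b ≤ j} D a b`. Summing by parts in both indices turns the quadratic form
`xᵀ S x` into `yᵀ D y` for the tail sums `y a = ∑_{i ≥ a} x i`. Conditions (1) and (3) say that
the off-diagonal entries of `D` are nonpositive, and (2) together with positivity of `S 1 n` says
that its row sums `S a n - S (a - 1) n` are nonnegative. A symmetric matrix with these two
properties is diagonally dominant, hence positive semidefinite.
-/

open Finset

theorem sum_Icc_one_sub_pred (g : ℕ → ℝ) (m : ℕ) :
    ∑ a ∈ Icc 1 m, (g a - g (a - 1)) = g m - g 0 := by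
  induction m with
  | zero => simp
  | succ k ih =>
    rw [sum_Icc_succ_top (by omega), ih]
    simp

theorem sum_mul_eq_sum_sub_pred_mul_tail (x g : ℕ → ℝ) (n : ℕ) (hg : g 0 = 0) :
    ∑ i ∈ Icc 1 n, x i * g i = ∑ a ∈ Icc 1 n, (g a - g (a - 1)) * ∑ i ∈ Icc a n, x i :=
  calc ∑ i ∈ Icc 1 n, x i * g i
      = ∑ i ∈ Icc 1 n, ∑ a ∈ Icc 1 i, x i * (g a - g (a - 1)) :=
        sum_congr rfl fun i _ => by rw [← mul_sum, sum_Icc_one_sub_pred, hg, sub_zero]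
    _ = ∑ a ∈ Icc 1 n, ∑ i ∈ Icc a n, x i * (g a - g (a - 1)) :=
        sum_comm' fun i a => by simp only [mem_Icc]; omega
    _ = _ := sum_congr rfl fun a _ => by rw [← sum_mul, mul_comm]

theorem quadratic_form_nonneg_of_offDiag_nonpos_of_sum_nonneg {ι : Type*} (s : Finset ι)
    (d : ι → ι → ℝ) (y : ι → ℝ) (hsymm : ∀ a ∈ s, ∀ b ∈ s, d a b = d b a)
    (hoff : ∀ a ∈ s, ∀ b ∈ s, a ≠ b → d a b ≤ 0) (hrow : ∀ a ∈ s, 0 ≤ ∑ b ∈ s, d a b) :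
    0 ≤ ∑ a ∈ s, ∑ b ∈ s, d a b * y a * y b := by
  have hswap : ∑ a ∈ s, ∑ b ∈ s, d a b * y b ^ 2 = ∑ a ∈ s, ∑ b ∈ s, d a b * y a ^ 2 := by
    rw [sum_comm]
    exact sum_congr rfl fun a ha => sum_congr rfl fun b hb => by rw [hsymm b hb a ha]
  have hsplit : ∑ a ∈ s, ∑ b ∈ s, d a b * y a * y b
      = ∑ a ∈ s, (∑ b ∈ s, d a b) * y a ^ 2
        + ∑ a ∈ s, ∑ b ∈ s, -d a b * (y a - y b) ^ 2 / 2 := by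
    have hexpand : ∑ a ∈ s, ∑ b ∈ s, -d a b * (y a - y b) ^ 2 / 2
        = ∑ a ∈ s, ∑ b ∈ s, d a b * y a * y b
          - (∑ a ∈ s, ∑ b ∈ s, d a b * y a ^ 2 + ∑ a ∈ s, ∑ b ∈ s, d a b * y b ^ 2) / 2 := by
      simp only [← sum_add_distrib, sum_div, ← sum_sub_distrib]
      exact sum_congr rfl fun _ _ => sum_congr rfl fun _ _ => by ring
    rw [hexpand, hswap]
    simp only [sum_mul]
    ring
  rw [hsplit]
  refine add_nonneg (sum_nonneg fun a ha => mul_nonneg (hrow a ha) (sq_nonneg _))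
    (sum_nonneg fun a ha => sum_nonneg fun b hb => ?_)
  rcases eq_or_ne a b with rfl | hab
  · simp
  · have := mul_nonneg (neg_nonneg.mpr (hoff a ha b hb hab)) (sq_nonneg (y a - y b))
    positivity

noncomputable def zeroExt (S : ℕ → ℕ → ℝ) (i j : ℕ) : ℝ :=
  if i = 0 ∨ j = 0 then 0 else S i j

def mixedDiff (F : ℕ → ℕ → ℝ) (a b : ℕ) : ℝ :=
  F a b - F (a - 1) b - F a (b - 1) + F (a - 1) (b - 1)

theorem quadratic_form_eq_mixedDiff_tail (F : ℕ → ℕ → ℝ) (x : ℕ → ℝ) (n : ℕ)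
    (hrow0 : ∀ j, F 0 j = 0) (hcol0 : ∀ i, F i 0 = 0) :
    ∑ i ∈ Icc 1 n, ∑ j ∈ Icc 1 n, x i * F i j * x j
      = ∑ a ∈ Icc 1 n, ∑ b ∈ Icc 1 n,
          mixedDiff F a b * (∑ i ∈ Icc a n, x i) * ∑ j ∈ Icc b n, x j := by
  set y : ℕ → ℝ := fun a => ∑ i ∈ Icc a n, x i
  calc ∑ i ∈ Icc 1 n, ∑ j ∈ Icc 1 n, x i * F i j * x j
      = ∑ i ∈ Icc 1 n, x i * ∑ j ∈ Icc 1 n, x j * F i j :=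
        sum_congr rfl fun i _ => by rw [mul_sum]; exact sum_congr rfl fun j _ => by ring
    _ = ∑ i ∈ Icc 1 n, x i * ∑ b ∈ Icc 1 n, (F i b - F i (b - 1)) * y b :=
        sum_congr rfl fun i _ => by rw [sum_mul_eq_sum_sub_pred_mul_tail x _ n (hcol0 i)]
    _ = ∑ b ∈ Icc 1 n, y b * ∑ i ∈ Icc 1 n, x i * (F i b - F i (b - 1)) := by
        simp only [mul_sum]
        rw [sum_comm]
        exact sum_congr rfl fun _ _ => sum_congr rfl fun _ _ => by ring
    _ = ∑ b ∈ Icc 1 n, y b * ∑ a ∈ Icc 1 n, mixedDiff F a b * y a := by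
        refine sum_congr rfl fun b _ => ?_
        rw [sum_mul_eq_sum_sub_pred_mul_tail x _ n (by simp [hrow0])]
        exact congrArg _ (sum_congr rfl fun a _ => by simp only [mixedDiff]; ring)
    _ = ∑ b ∈ Icc 1 n, ∑ a ∈ Icc 1 n, y b * (mixedDiff F a b * y a) :=
        sum_congr rfl fun b _ => mul_sum ..
    _ = _ := by
        rw [sum_comm]
        exact sum_congr rfl fun _ _ => sum_congr rfl fun _ _ => by ring

theorem mixedDiff_comm {F : ℕ → ℕ → ℝ} {n : ℕ} (hF : ∀ i j, i ≤ n → j ≤ n → F i j = F j i)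
    {a b : ℕ} (ha : a ≤ n) (hb : b ≤ n) : mixedDiff F a b = mixedDiff F b a := by
  simp only [mixedDiff]
  rw [hF a b ha hb, hF (a - 1) b (by omega) hb, hF a (b - 1) ha (by omega),
    hF (a - 1) (b - 1) (by omega) (by omega)]
  ring

theorem sum_mixedDiff_Icc (F : ℕ → ℕ → ℝ) (hcol0 : ∀ i, F i 0 = 0) (a n : ℕ) :
    ∑ b ∈ Icc 1 n, mixedDiff F a b = F a n - F (a - 1) n := by
  have := sum_Icc_one_sub_pred (fun b => F a b - F (a - 1) b) n
  simp only [hcol0, sub_zero] at this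
  rw [← this]
  exact sum_congr rfl fun _ _ => by simp only [mixedDiff]; ring

section zeroExt

variable {n : ℕ} {S : ℕ → ℕ → ℝ}

theorem zeroExt_comm (hsym : ∀ i j, 1 ≤ i → i ≤ n → 1 ≤ j → j ≤ n → S i j = S j i)
    (i j : ℕ) (hi : i ≤ n) (hj : j ≤ n) : zeroExt S i j = zeroExt S j i := by
  unfold zeroExt
  split_ifs with h h' h' <;> first | rfl | omega | exact hsym i j (by omega) hi (by omega) hj

theorem mixedDiff_zeroExt_nonpos_of_lt
    (h1 : ∀ i j, 1 ≤ j → j < i → i ≤ n → S i j ≤ S (i - 1) j)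
    (h3 : ∀ i j, 1 < j → j < i → i ≤ n →
      S (i - 1) (j - 1) - S i (j - 1) ≤ S (i - 1) j - S i j)
    {a b : ℕ} (ha : a ≤ n) (hb : 1 ≤ b) (hba : b < a) : mixedDiff (zeroExt S) a b ≤ 0 := by
  have h_ne : a ≠ 0 ∧ a - 1 ≠ 0 ∧ b ≠ 0 := by omega
  rcases eq_or_lt_of_le hb with rfl | hb
  · simp [mixedDiff, zeroExt, h_ne, h1 a 1 le_rfl hba ha]
  · have := h3 a b hb hba ha
    simp only [mixedDiff, zeroExt, h_ne, show b - 1 ≠ 0 by omega, or_self, if_false]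
    linarith

theorem sum_mixedDiff_zeroExt_nonneg
    (hsym : ∀ i j, 1 ≤ i → i ≤ n → 1 ≤ j → j ≤ n → S i j = S j i)
    (h1n : 0 < S 1 n) (h2 : ∀ i j, 1 < j → j ≤ i → i ≤ n → S i (j - 1) < S i j)
    {a : ℕ} (ha₁ : 1 ≤ a) (ha : a ≤ n) : 0 ≤ ∑ b ∈ Icc 1 n, mixedDiff (zeroExt S) a b := by
  rw [sum_mixedDiff_Icc _ (fun i => by simp [zeroExt])]
  rcases eq_or_lt_of_le ha₁ with rfl | ha₁
  · simp [zeroExt, show n ≠ 0 by omega, h1n.le]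
  · have := h2 n a ha₁ ha le_rfl
    rw [zeroExt_comm hsym a n ha le_rfl, zeroExt_comm hsym (a - 1) n (by omega) le_rfl]
    simp only [zeroExt, show n ≠ 0 by omega, show a ≠ 0 by omega, show a - 1 ≠ 0 by omega,
      or_self, if_false]
    linarith

end zeroExt

/-- Let `S` be an `n×n` real symmetric matrix (indexed by `1,…,n`) with positive
entries satisfying:
(1) `S_{i-1,j} ≥ S_{i,j}` for all `1 ≤ j < i ≤ n`;
(2) `S_{i,j-1} < S_{i,j}` for all `1 < j ≤ i ≤ n`;
(3) `S_{i-1,j-1} - S_{i,j-1} ≤ S_{i-1,j} - S_{i,j}` for all `1 < j < i ≤ n`.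
Then `S` is positive semidefinite. -/
theorem stmt_10 (n : ℕ) (S : ℕ → ℕ → ℝ)
    (hsym : ∀ i j, 1 ≤ i → i ≤ n → 1 ≤ j → j ≤ n → S i j = S j i)
    (hpos : ∀ i j, 1 ≤ i → i ≤ n → 1 ≤ j → j ≤ n → 0 < S i j)
    (h1 : ∀ i j, 1 ≤ j → j < i → i ≤ n → S i j ≤ S (i - 1) j)
    (h2 : ∀ i j, 1 < j → j ≤ i → i ≤ n → S i (j - 1) < S i j)
    (h3 : ∀ i j, 1 < j → j < i → i ≤ n →
      S (i - 1) (j - 1) - S i (j - 1) ≤ S (i - 1) j - S i j) :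
    ∀ x : ℕ → ℝ,
      0 ≤ ∑ i ∈ Finset.Icc 1 n, ∑ j ∈ Finset.Icc 1 n, x i * S i j * x j := by
  intro x
  have h_ext : ∀ i ∈ Icc 1 n, ∀ j ∈ Icc 1 n, x i * S i j * x j = x i * zeroExt S i j * x j := by
    intro i hi j hj
    simp only [mem_Icc] at hi hj
    simp [zeroExt, show i ≠ 0 by omega, show j ≠ 0 by omega]
  rw [sum_congr rfl fun i hi => sum_congr rfl (h_ext i hi),
    quadratic_form_eq_mixedDiff_tail _ x n (by simp [zeroExt]) (by simp [zeroExt])]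
  have h_comm : ∀ a ∈ Icc 1 n, ∀ b ∈ Icc 1 n,
      mixedDiff (zeroExt S) a b = mixedDiff (zeroExt S) b a := fun a ha b hb =>
    mixedDiff_comm (zeroExt_comm hsym) (mem_Icc.mp ha).2 (mem_Icc.mp hb).2
  refine quadratic_form_nonneg_of_offDiag_nonpos_of_sum_nonneg _ _ _ h_comm ?off_diag ?row_sum
  case off_diag =>
    intro a ha b hb hab
    simp only [mem_Icc] at ha hb
    rcases hab.lt_or_gt with hab | hab
    · rw [h_comm a (mem_Icc.mpr ha) b (mem_Icc.mpr hb)]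
      exact mixedDiff_zeroExt_nonpos_of_lt h1 h3 hb.2 ha.1 hab
    · exact mixedDiff_zeroExt_nonpos_of_lt h1 h3 ha.2 hb.1 hab
  case row_sum =>
    intro a ha
    obtain ⟨ha₁, ha⟩ := mem_Icc.mp ha
    exact sum_mixedDiff_zeroExt_nonneg hsym (hpos 1 n le_rfl (by omega) (by omega) le_rfl) h2 ha₁ ha
end

section
/- For α ∈ (0,1), σ = 1-α/2, and positive reals τ_k, τ_{k+1} with ρ_{k+1} = τ_{k+1}/τ_k ≥ η where η is the unique positive root of 1-3ρ²(1+ρ)=0: σ^{1-α}/((1-α)τ_k^α) - (1/2)(στ_k)^{-α} - (1/2)(στ_{k+1})^{-α} + (1/2)(στ_{k+1}+τ_k)^{-α} ≥ (1/(2(1-α)(στ_k)^α))·(1-(1-α)σ^α[(ση)^{-α}-(ση+1)^{-α}]) ≥ 0.3/((1-α)(στ_k)^α) > 0. -/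
/-!
After the scaling `τ_{k+1} = ρ τ_k`, the diagonal term equals
`(2(1-α)(στ_k)^α)⁻¹ · (1 - (1-α) σ^α g(σρ))` with `g(x) = x^{-α} - (x+1)^{-α}`, the constant
term coming from `σ/(1-α) - 1/2 = 1/(2(1-α))`. Since `g` is decreasing, `ρ ≥ η` lets us replace
`ρ` by `η`. Finally `(1-α) σ^α g(ση) = (1-α)(η^{-α} - (η + σ⁻¹)^{-α}) ≤ 2/5`: the concavity
bound `c^α ≤ 1 - α + αc` bounds `η^{-α} = ((η^{-1/2})^α)^2` from above and `(η + σ⁻¹)^{-α}` from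
below, and with `η ∈ [0.475, 0.476]` what remains is a polynomial inequality in `α`.
-/
open Real Set

lemma rpow_le_one_sub_add_mul {a c : ℝ} (hc : 0 ≤ c) (ha0 : 0 ≤ a) (ha1 : a ≤ 1) :
    c ^ a ≤ 1 - a + a * c := by
  have h := rpow_one_add_le_one_add_mul_self (s := c - 1) (by linarith) ha0 ha1
  rw [add_sub_cancel] at h
  linarith

lemma inv_one_sub_add_mul_le_rpow_neg {a c : ℝ} (hc : 0 < c) (ha0 : 0 ≤ a) (ha1 : a ≤ 1) :
    (1 - a + a * c)⁻¹ ≤ c ^ (-a) := by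
  rw [rpow_neg hc.le]
  exact inv_anti₀ (by positivity) (rpow_le_one_sub_add_mul hc.le ha0 ha1)

lemma rpow_neg_le_sq_one_sub_add_mul_sqrt_inv {a η : ℝ} (hη : 0 < η) (ha0 : 0 ≤ a) (ha1 : a ≤ 1) :
    η ^ (-a) ≤ (1 - a + a * √η⁻¹) ^ 2 := by
  have hs : 0 ≤ √η⁻¹ := sqrt_nonneg _
  have h : η ^ (-a) = (√η⁻¹ ^ a) ^ 2 := by
    rw [← rpow_natCast, ← rpow_mul hs, mul_comm, rpow_mul hs, Nat.cast_ofNat, rpow_two,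
      sq_sqrt (inv_nonneg.2 hη.le), inv_rpow hη.le, rpow_neg hη.le]
  rw [h]
  exact pow_le_pow_left₀ (rpow_nonneg hs a) (rpow_le_one_sub_add_mul hs ha0 ha1) 2

lemma rpow_mul_mul_rpow_neg {a σ x : ℝ} (hσ : 0 < σ) (hx : 0 ≤ x) :
    σ ^ a * (σ * x) ^ (-a) = x ^ (-a) := by
  rw [mul_rpow hσ.le hx, ← mul_assoc, ← rpow_add hσ, add_neg_cancel, rpow_zero, one_mul]

/-- `x ^ (-a) - (x + 1) ^ (-a) = x ^ (-a) * (1 - (x / (x + 1)) ^ a)` is a product of two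
nonnegative antitone factors. -/
lemma antitoneOn_rpow_neg_sub_rpow_neg_add_one {a : ℝ} (ha : 0 ≤ a) :
    AntitoneOn (fun x : ℝ ↦ x ^ (-a) - (x + 1) ^ (-a)) (Ioi 0) := by
  have hfac : ∀ z : ℝ, 0 < z → z ^ (-a) - (z + 1) ^ (-a) = z ^ (-a) * (1 - (z / (z + 1)) ^ a) := by
    intro z hz
    have : 0 < (z + 1) ^ a := by positivity
    rw [div_rpow hz.le (by linarith), rpow_neg hz.le, rpow_neg (by linarith)]
    field_simp
  intro x (hx : 0 < x) y (hy : 0 < y) hxy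
  simp only [hfac x hx, hfac y hy]
  have hratio : (x / (x + 1)) ^ a ≤ (y / (y + 1)) ^ a := by
    refine rpow_le_rpow (by positivity) ?_ ha
    rw [div_le_div_iff₀ (by linarith) (by linarith)]
    linarith
  have hratio_le_one : (y / (y + 1)) ^ a ≤ 1 :=
    rpow_le_one (by positivity) ((div_le_one (by linarith)).2 (by linarith)) ha
  apply mul_le_mul _ (by linarith) (by linarith) (by positivity)
  rw [rpow_neg hx.le, rpow_neg hy.le]
  exact inv_anti₀ (by positivity) (rpow_le_rpow hx.le hxy ha)

lemma cubic_root_mem_Icc {η : ℝ} (hη : 0 < η) (hroot : 1 - 3 * η ^ 2 * (1 + η) = 0) :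
    η ∈ Icc (475 / 1000) (476 / 1000) := by
  constructor <;> nlinarith [sq_nonneg (η - 475 / 1000), sq_nonneg (η - 476 / 1000), mul_pos hη hη]

lemma one_le_sqrt_inv_le_of_mem_Icc {η : ℝ} (hη : η ∈ Icc (475 / 1000) (476 / 1000)) :
    1 ≤ √η⁻¹ ∧ √η⁻¹ ≤ 1451 / 1000 := by
  obtain ⟨hη₁, hη₂⟩ := hη
  constructor
  · rw [one_le_sqrt, one_le_inv₀ (by linarith)]
    linarith
  · rw [sqrt_le_left (by norm_num), inv_le_comm₀ (by linarith) (by norm_num)]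
    linarith

lemma one_sub_mul_sq_sub_inv_le_two_fifths {a : ℝ} (ha0 : 0 ≤ a) (ha1 : a ≤ 1) :
    (1 - a) * ((1 - a + a * (1451 / 1000)) ^ 2 - (1 - a + a * (476 / 1000 + (1 - a / 2)⁻¹))⁻¹)
      ≤ 2 / 5 := by
  set E := (1 - a + a * (476 / 1000)) * (2 - a) + 2 * a with hE
  have hE0 : 0 < E := by nlinarith
  have hinv : (1 - a + a * (476 / 1000 + (1 - a / 2)⁻¹))⁻¹ = (2 - a) / E := by
    have : 2 - a ≠ 0 := by linarith
    rw [hE]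
    field_simp
    ring
  have hclear : (1 - a) * ((1 - a + a * (1451 / 1000)) ^ 2 - (2 - a) / E)
      = (1 - a) * ((1 - a + a * (1451 / 1000)) ^ 2 * E - (2 - a)) / E := by
    field_simp
  rw [hinv, hclear, div_le_iff₀ hE0, hE]
  nlinarith [sq_nonneg (a - 131/250), mul_nonneg ha0 (sub_nonneg.2 ha1),
    sq_nonneg (a * (a - 131/250)), mul_nonneg (mul_nonneg ha0 ha0) (sub_nonneg.2 ha1), sq_nonneg a,
    mul_nonneg (mul_nonneg ha0 ha0) ha0, sq_nonneg (a * a)]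

lemma one_sub_mul_rpow_mul_gap_le {α σ η : ℝ} (hα0 : 0 ≤ α) (hα1 : α ≤ 1)
    (hσ : σ = 1 - α / 2) (hη : 0 < η) (hroot : 1 - 3 * η ^ 2 * (1 + η) = 0) :
    (1 - α) * σ ^ α * ((σ * η) ^ (-α) - (σ * η + 1) ^ (-α)) ≤ 2 / 5 := by
  have hσ0 : 0 < σ := by rw [hσ]; linarith
  have hηI := cubic_root_mem_Icc hη hroot
  obtain ⟨hs₁, hs₂⟩ := one_le_sqrt_inv_le_of_mem_Icc hηI
  have hshift : σ * η + 1 = σ * (η + σ⁻¹) := by field_simp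
  have hc : 0 < η + σ⁻¹ := by positivity
  calc (1 - α) * σ ^ α * ((σ * η) ^ (-α) - (σ * η + 1) ^ (-α))
      = (1 - α) * (η ^ (-α) - (η + σ⁻¹) ^ (-α)) := by
        rw [hshift, mul_assoc, mul_sub, rpow_mul_mul_rpow_neg hσ0 hη.le,
          rpow_mul_mul_rpow_neg hσ0 hc.le]
    _ ≤ (1 - α) * ((1 - α + α * √η⁻¹) ^ 2 - (1 - α + α * (η + σ⁻¹))⁻¹) := by
        gcongr (1 - α) * (?_ - ?_)
        · exact rpow_neg_le_sq_one_sub_add_mul_sqrt_inv hη hα0 hα1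
        · exact inv_one_sub_add_mul_le_rpow_neg hc hα0 hα1
    _ ≤ (1 - α) * ((1 - α + α * (1451 / 1000)) ^ 2 - (1 - α + α * (476 / 1000 + σ⁻¹))⁻¹) := by
        have hσ_inv : 1 ≤ σ⁻¹ := one_le_inv₀ hσ0 |>.2 (by linarith)
        gcongr
        · nlinarith
        · nlinarith [mul_nonneg hα0 (by linarith : 0 ≤ η + σ⁻¹ - 1)]
    _ ≤ 2 / 5 := hσ ▸ one_sub_mul_sq_sub_inv_le_two_fifths hα0 hα1

lemma diagonal_term_eq {α σ τ τ' : ℝ} (hα : α < 1) (hσ : σ = 1 - α / 2) (hτ : 0 < τ)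
    (hτ' : 0 < τ') :
    σ ^ (1 - α) / ((1 - α) * τ ^ α) - (1 / 2) * (σ * τ) ^ (-α) -
        (1 / 2) * (σ * τ') ^ (-α) + (1 / 2) * (σ * τ' + τ) ^ (-α)
      = 1 / (2 * (1 - α) * (σ * τ) ^ α) *
          (1 - (1 - α) * σ ^ α * ((σ * (τ' / τ)) ^ (-α) - (σ * (τ' / τ) + 1) ^ (-α))) := by
  have hσ0 : 0 < σ := by rw [hσ]; linarith
  have h1α : 1 - α ≠ 0 := by linarith
  have hρ : 0 ≤ σ * (τ' / τ) := by positivity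
  have hleading : σ ^ (1 - α) / ((1 - α) * τ ^ α) - 1 / 2 * (σ * τ) ^ (-α)
      = 1 / (2 * (1 - α) * (σ * τ) ^ α) := by
    rw [rpow_sub hσ0, rpow_one, rpow_neg (by positivity), mul_rpow hσ0.le hτ.le]
    field_simp
    rw [hσ]
    ring
  have hcoeff : 1 / (2 * (1 - α) * (σ * τ) ^ α) * ((1 - α) * σ ^ α) = 1 / 2 * τ ^ (-α) := by
    rw [mul_rpow hσ0.le hτ.le, rpow_neg hτ.le]
    field_simp
  have hscale₁ : (σ * τ') ^ (-α) = (σ * (τ' / τ)) ^ (-α) * τ ^ (-α) := by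
    rw [← mul_rpow hρ hτ.le]
    field_simp
  have hscale₂ : (σ * τ' + τ) ^ (-α) = (σ * (τ' / τ) + 1) ^ (-α) * τ ^ (-α) := by
    rw [← mul_rpow (by positivity) hτ.le]
    field_simp
  rw [hscale₁, hscale₂]
  linear_combination hleading +
    ((σ * (τ' / τ)) ^ (-α) - (σ * (τ' / τ) + 1) ^ (-α)) * hcoeff

/-- Key diagonal positivity estimate. For `α ∈ (0,1)`, `σ = 1-α/2`, positive
`τ_k, τ_{k+1}` with `τ_{k+1}/τ_k ≥ η`, `η` the unique positive root of
`1-3ρ²(1+ρ)=0`: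
`σ^{1-α}/((1-α)τ_k^α) - (1/2)(στ_k)^{-α} - (1/2)(στ_{k+1})^{-α} + (1/2)(στ_{k+1}+τ_k)^{-α}
  ≥ (1/(2(1-α)(στ_k)^α))·(1-(1-α)σ^α[(ση)^{-α}-(ση+1)^{-α}])
  ≥ 0.3/((1-α)(στ_k)^α) > 0`. -/
theorem stmt_19 (α σ η τk τk1 : ℝ) (hα0 : 0 < α) (hα1 : α < 1)
    (hσ : σ = 1 - α / 2) (hηpos : 0 < η) (hηroot : 1 - 3 * η ^ 2 * (1 + η) = 0)
    (hτk : 0 < τk) (hτk1 : 0 < τk1) (hρ : η ≤ τk1 / τk) :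
    σ ^ (1 - α) / ((1 - α) * τk ^ α) - (1 / 2) * (σ * τk) ^ (-α) -
        (1 / 2) * (σ * τk1) ^ (-α) + (1 / 2) * (σ * τk1 + τk) ^ (-α)
      ≥ 1 / (2 * (1 - α) * (σ * τk) ^ α) *
          (1 - (1 - α) * σ ^ α * ((σ * η) ^ (-α) - (σ * η + 1) ^ (-α))) ∧
    1 / (2 * (1 - α) * (σ * τk) ^ α) *
        (1 - (1 - α) * σ ^ α * ((σ * η) ^ (-α) - (σ * η + 1) ^ (-α)))
      ≥ 0.3 / ((1 - α) * (σ * τk) ^ α) ∧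
    0 < 0.3 / ((1 - α) * (σ * τk) ^ α) := by
  have hσ0 : 0 < σ := by rw [hσ]; linarith
  have hgap_mono := antitoneOn_rpow_neg_sub_rpow_neg_add_one hα0.le
    (mem_Ioi.2 (mul_pos hσ0 hηpos)) (mem_Ioi.2 (mul_pos hσ0 (div_pos hτk1 hτk)))
    (mul_le_mul_of_nonneg_left hρ hσ0.le)
  have hgap_le := one_sub_mul_rpow_mul_gap_le hα0.le hα1.le hσ hηpos hηroot
  refine ⟨?_, ?_, by positivity⟩
  · rw [diagonal_term_eq hα1 hσ hτk hτk1, ge_iff_le]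
    gcongr
  · rw [ge_iff_le, show (0.3 : ℝ) / ((1 - α) * (σ * τk) ^ α)
      = 1 / (2 * (1 - α) * (σ * τk) ^ α) * (3 / 5) by field_simp; norm_num]
    gcongr
    linarith
end
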